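/- arXiv:2510.25511 — 2 statements merged into one kernel-verified Lean document; each statement's English description precedes it below -/
import Mathlib

section
/- A 7-dimensional Lie algebra g admitting a basis in which every closed 4-form lies in ⟨e^1,e^2⟩∧Λ³g* admits no coclosed G₂-structure. Concretely: if every closed κ ∈ Λ⁴g* satisfies κ = e^1∧α + e^2∧β for some α,β ∈ Λ³g*, then there is no 3-form φ ∈ Λ³g* which is positive (i.e., equivalent under GL(7,ℝ) to the standard G₂ 3-form) and satisfies d(*_φ φ)=0. -/
/-! A closed positive 4-form is `σ = A·σ₀` for some `A ∈ GL(7,ℝ)`. If it lies in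
`e¹ ∧ Λ³ + e² ∧ Λ³`, then `e¹ ∧ e² ∧ σ = 0`, i.e. `u ∧ v ∧ σ₀ = 0` for the linearly
independent `u = A⁻¹e¹`, `v = A⁻¹e²`. But the components of `u ∧ v ∧ σ₀` are those of a
`G₂` cross product `u × v`, and `|u × v|² = |u ∧ v|² ≠ 0`. -/

noncomputable section

/-- We model the dual `g*` of a 7-dimensional real Lie algebra on `ℝ⁷`. -/
abbrev V7 : Type := Fin 7 → ℝ

/-- The exterior algebra `Λ•g*` of forms. -/
abbrev E7 : Type := ExteriorAlgebra ℝ V7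

/-- The generators `e^1, …, e^7` (indexed `0, …, 6`). -/
def ε (i : Fin 7) : E7 := ExteriorAlgebra.ι ℝ (Pi.single i 1)

/-- The degree-`k` component `Λ^k g*` of the exterior algebra. -/
def deg (k : ℕ) : Submodule ℝ E7 :=
  LinearMap.range (ExteriorAlgebra.ι ℝ : V7 →ₗ[ℝ] E7) ^ k

/-- Dualization `g → g**` induced by the standard basis (identifying `g ≅ ℝ⁷`). -/
def dualize : V7 →ₗ[ℝ] Module.Dual ℝ V7 := (Pi.basisFun ℝ (Fin 7)).toDual

/-- Interior product (contraction) `ι_v` of forms with a vector `v ∈ g`. -/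
def ic (v : V7) : E7 →ₗ[ℝ] E7 := CliffordAlgebra.contractLeft (dualize v)

lemma ic_sq (v : V7) : (ic v) * (ic v) = 0 := by
  ext x
  simp [ic, Module.End.mul_apply, CliffordAlgebra.contractLeft_contractLeft]

/-- Contraction of forms by multivectors (identified with elements of `E7` via the
basis), extended multiplicatively from contraction by vectors. -/
def contra : E7 →ₐ[ℝ] Module.End ℝ E7 :=
  ExteriorAlgebra.lift ℝ
    ⟨{ toFun := ic,
       map_add' := by intro a b; ext x; simp [ic],
       map_smul' := by intro c a; ext x; simp [ic] }, fun v => ic_sq v⟩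

/-- The standard volume form `e^{1234567}`. -/
def vol7 : E7 := ε 0 * ε 1 * ε 2 * ε 3 * ε 4 * ε 5 * ε 6

/-- The standard `G₂` 3-form
`φ₀ = e^{127}+e^{347}+e^{567}+e^{135}-e^{146}-e^{236}-e^{245}`. -/
def phi0 : E7 :=
  ε 0*ε 1*ε 6 + ε 2*ε 3*ε 6 + ε 4*ε 5*ε 6 + ε 0*ε 2*ε 4
    - ε 0*ε 3*ε 5 - ε 1*ε 2*ε 5 - ε 1*ε 3*ε 4

/-- The standard `G₂` 4-form
`σ₀ = e^{3456}+e^{1256}+e^{1234}+e^{2467}-e^{2357}-e^{1457}-e^{1367}` (the Hodge dual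
of `φ₀` for the Euclidean metric and standard orientation). -/
def sigma0 : E7 :=
  ε 2*ε 3*ε 4*ε 5 + ε 0*ε 1*ε 4*ε 5 + ε 0*ε 1*ε 2*ε 3 + ε 1*ε 3*ε 5*ε 6
    - ε 1*ε 2*ε 4*ε 6 - ε 0*ε 3*ε 4*ε 6 - ε 0*ε 2*ε 5*ε 6

/-- A 4-form is positive (stable) if it lies in the `GL(7,ℝ)`-orbit of the standard
`G₂` 4-form `σ₀`. -/
def Positive4 (σ : E7) : Prop :=
  ∃ A : V7 ≃ₗ[ℝ] V7, ExteriorAlgebra.map (A.toLinearMap) sigma0 = σ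

/-- `IsCE dg D` says that `D` is the Chevalley–Eilenberg differential, extended as an
odd (degree-1) derivation to `Λ•g*`, of the Lie algebra whose structure equations are
`d e^i = dg i`: it kills constants and satisfies the graded Leibniz rule against
degree-one elements (this characterizes `D` uniquely). -/
def IsCE (dg : Fin 7 → E7) (D : E7 →ₗ[ℝ] E7) : Prop :=
  D 1 = 0 ∧ ∀ (i : Fin 7) (y : E7), D (ε i * y) = dg i * y - ε i * D y

open ExteriorAlgebra

section ExteriorAlgebra

variable {R M N : Type*} [CommRing R] [AddCommGroup M] [Module R M] [AddCommGroup N] [Module R N]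

lemma ExteriorAlgebra.algebraMapInv_ι (x : M) : algebraMapInv (ι R x) = 0 := by
  simp [algebraMapInv]

lemma ExteriorAlgebra.ι_mul_ι_mul_ι_mul_add (x y : M) (a b : ExteriorAlgebra R M) :
    ι R x * (ι R y * (ι R x * a + ι R y * b)) = 0 := by
  have hyx : ι R y * ι R x = -(ι R x * ι R y) := eq_neg_of_add_eq_zero_left (ι_add_mul_swap y x)
  simp only [mul_add, ← mul_assoc, hyx, ι_sq_zero, mul_neg, ← neg_mul, neg_zero, zero_mul, add_zero]

lemma ExteriorAlgebra.mul_ι_mem_exteriorPower_succ {n : ℕ} {x : ExteriorAlgebra R M}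
    (hx : x ∈ ⋀[R]^n M) (m : M) : x * ι R m ∈ ⋀[R]^(n + 1) M := by
  rw [exteriorPower, pow_succ]
  exact Submodule.mul_mem_mul hx (LinearMap.mem_range_self _ m)

lemma ExteriorAlgebra.map_mem_exteriorPower (f : M →ₗ[R] N) {n : ℕ} {x : ExteriorAlgebra R M}
    (hx : x ∈ ⋀[R]^n M) : map f x ∈ ⋀[R]^n N := by
  have hrange : Submodule.map (map f).toLinearMap (LinearMap.range (ι R)) ≤ LinearMap.range (ι R) := by
    rintro _ ⟨_, ⟨m, rfl⟩, rfl⟩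
    exact ⟨f m, (map_apply_ι f m).symm⟩
  have := Submodule.mem_map_of_mem (f := (map f).toLinearMap) hx
  rw [exteriorPower, Submodule.map_pow] at this
  exact pow_le_pow_left' hrange n this

end ExteriorAlgebra

def plucker {I R : Type*} [CommRing R] (u v : I → R) (a b : I) : R := u a * v b - u b * v a

lemma eq_zero_or_exists_eq_smul_of_plucker_eq_zero {I K : Type*} [Field K] {u v : I → K}
    (h : ∀ a b, plucker u v a b = 0) : u = 0 ∨ ∃ c : K, v = c • u := by
  by_cases hu : u = 0
  · exact Or.inl hu
  obtain ⟨a, ha⟩ := Function.ne_iff.1 hu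
  refine Or.inr ⟨v a / u a, funext fun b => ?_⟩
  have hab : u a * v b = u b * v a := sub_eq_zero.1 (h a b)
  rw [Pi.smul_apply, smul_eq_mul, div_mul_eq_mul_div, eq_div_iff ha]
  linear_combination hab

lemma linearIndependent_pair_single {I R : Type*} [DecidableEq I] [Ring R] {i j : I} (hij : i ≠ j) :
    LinearIndependent R ![(Pi.single i 1 : I → R), Pi.single j 1] :=
  LinearIndependent.pair_iff.2 fun s t h =>
    ⟨by simpa [hij] using congrFun h i, by simpa [hij.symm] using congrFun h j⟩

lemma dualize_single (j : Fin 7) (x : V7) : dualize (Pi.single j 1) x = x j := by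
  simp [dualize, ← Pi.basisFun_apply, Module.Basis.toDual_apply_right]

lemma ic_single_ι_mul (j : Fin 7) (x : V7) (y : E7) :
    ic (Pi.single j 1) (ι ℝ x * y) = x j • y - ι ℝ x * ic (Pi.single j 1) y := by
  rw [ic, CliffordAlgebra.contractLeft_ι_mul, dualize_single]

lemma ic_single_ι (j : Fin 7) (x : V7) : ic (Pi.single j 1) (ι ℝ x) = algebraMap ℝ E7 (x j) := by
  rw [ic, CliffordAlgebra.contractLeft_ι, dualize_single]

lemma ic_single_ε_mul (i j : Fin 7) (y : E7) :
    ic (Pi.single j 1) (ε i * y) = (if i = j then y else 0) - ε i * ic (Pi.single j 1) y := by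
  rw [ε, ic_single_ι_mul, Pi.single_apply]
  split_ifs <;> simp_all

lemma ic_single_ε (i j : Fin 7) : ic (Pi.single j 1) (ε i) = if i = j then 1 else 0 := by
  rw [ε, ic_single_ι, Pi.single_apply]
  split_ifs <;> simp_all

lemma contra_ε (i : Fin 7) : contra (ε i) = ic (Pi.single i 1) := by
  simp [contra, ε]

/-- The coefficient of `e^{1234567}`: `contra` of a product applies its rightmost factor first,
hence the reversed order. -/
def topCoeff : E7 →ₗ[ℝ] ℝ :=
  algebraMapInv.toLinearMap ∘ₗ contra (ε 6 * ε 5 * ε 4 * ε 3 * ε 2 * ε 1 * ε 0)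

/-- Up to signs, the `G₂` cross product of `u` and `v`. -/
def g2Cross (u v : V7) : Fin 7 → ℝ :=
  ![plucker u v 1 6 - plucker u v 2 4 + plucker u v 3 5,
    plucker u v 2 5 + plucker u v 3 4 - plucker u v 0 6,
    plucker u v 0 4 - plucker u v 1 5 + plucker u v 3 6,
    -plucker u v 0 5 - plucker u v 1 4 - plucker u v 2 6,
    plucker u v 1 3 + plucker u v 5 6 - plucker u v 0 2,
    plucker u v 0 3 + plucker u v 1 2 - plucker u v 4 6,
    plucker u v 0 1 + plucker u v 2 3 + plucker u v 4 5]

set_option maxHeartbeats 400000 in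
lemma topCoeff_ι_mul_ι_mul_sigma0_mul_ε (u v : V7) (k : Fin 7) :
    topCoeff (ι ℝ u * (ι ℝ v * sigma0) * ε k) = g2Cross u v k := by
  fin_cases k <;> simp only [Fin.reduceFinMk, Fin.isValue] <;>
  simp only [topCoeff, sigma0, LinearMap.comp_apply, AlgHom.toLinearMap_apply, map_mul,
    Module.End.mul_apply, contra_ε, mul_add, mul_sub, add_mul, sub_mul, map_add, map_sub, mul_assoc,
    ic_single_ι_mul, ic_single_ε_mul, ic_single_ε, ic_single_ι, Fin.reduceEq, ↓reduceIte,
    mul_zero, sub_zero, zero_sub, smul_zero, map_neg, map_smul, mul_neg, smul_neg, mul_smul_comm,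
    smul_sub, sub_self, add_zero, neg_neg, mul_one, map_one, smul_eq_mul,
    algebraMapInv_ι, map_zero, ExteriorAlgebra.algebraMap_leftInverse _ _] <;>
  simp only [g2Cross, plucker, Fin.isValue, Matrix.cons_val] <;>
  ring

lemma two_mul_sum_sq_g2Cross (u v : V7) :
    2 * ∑ k, g2Cross u v k ^ 2 = ∑ a, ∑ b, plucker u v a b ^ 2 := by
  -- `|u × v|² = |u ∧ v|²`: the cross terms cancel by the Plücker relations, which `ring` sees
  -- once the Plücker coordinates are expanded.
  simp only [Fin.sum_univ_seven, g2Cross, plucker, Matrix.cons_val]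
  ring

lemma plucker_eq_zero_of_ι_mul_ι_mul_sigma0_eq_zero {u v : V7} (h : ι ℝ u * (ι ℝ v * sigma0) = 0)
    (a b : Fin 7) : plucker u v a b = 0 := by
  have hcross : g2Cross u v = 0 := funext fun k => by
    rw [← topCoeff_ι_mul_ι_mul_sigma0_mul_ε, h, zero_mul, map_zero, Pi.zero_apply]
  have hsum : ∑ a, ∑ b, plucker u v a b ^ 2 = 0 := by
    simp [← two_mul_sum_sq_g2Cross, hcross]
  rw [Fintype.sum_eq_zero_iff_of_nonneg fun _ => Finset.sum_nonneg fun _ _ => sq_nonneg _] at hsum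
  have hrow := congrFun hsum a
  rw [Pi.zero_apply, Fintype.sum_eq_zero_iff_of_nonneg fun _ => sq_nonneg _] at hrow
  exact pow_eq_zero_iff two_ne_zero |>.1 (congrFun hrow b)

lemma sigma0_mem_deg_four : sigma0 ∈ deg 4 := by
  have hε : ∀ i, ε i ∈ deg 1 := fun i => by
    rw [deg, pow_one]; exact LinearMap.mem_range_self _ _
  unfold sigma0
  repeat' first
    | apply Submodule.add_mem | apply Submodule.sub_mem
    | apply mul_ι_mem_exteriorPower_succ | apply hε

lemma Positive4.mem_deg_four {σ : E7} (hσ : Positive4 σ) : σ ∈ deg 4 := by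
  obtain ⟨A, rfl⟩ := hσ
  exact map_mem_exteriorPower _ sigma0_mem_deg_four

lemma not_positive4_ι_mul_add_ι_mul {x y : V7} (hxy : LinearIndependent ℝ ![x, y]) (α β : E7) :
    ¬ Positive4 (ι ℝ x * α + ι ℝ y * β) := by
  rintro ⟨A, hA⟩
  have hwedge : ι ℝ (A.symm x) * (ι ℝ (A.symm y) * sigma0) = 0 := by
    refine map_injective (f := A.toLinearMap) ⟨A.symm.toLinearMap, by ext; simp⟩ ?_
    rw [map_mul, map_mul, map_apply_ι, map_apply_ι, LinearEquiv.coe_coe, A.apply_symm_apply,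
      A.apply_symm_apply, hA, map_zero]
    exact ι_mul_ι_mul_ι_mul_add x y α β
  rcases eq_zero_or_exists_eq_smul_of_plucker_eq_zero
    (plucker_eq_zero_of_ι_mul_ι_mul_sigma0_eq_zero hwedge) with hx | ⟨c, hy⟩
  · exact hxy.ne_zero 0 (by simpa using hx)
  · have : c • x = (1 : ℝ) • y := by simpa using (congrArg A hy).symm
    exact one_ne_zero (hxy.eq_zero_of_pair' this).2

/-- Coclosed `G₂`-structures `φ` correspond to closed positive 4-forms `*_φ φ` (the map
`φ ↦ *_φ φ` is a double cover onto the positive 4-forms), so the statement is about the latter. -/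
theorem stmt4_second_obstruction_general (D : E7 →ₗ[ℝ] E7)
    (hclosed : ∀ κ ∈ deg 4, D κ = 0 →
      ∃ α ∈ deg 3, ∃ β ∈ deg 3, κ = ε 0 * α + ε 1 * β) :
    ¬ ∃ σ : E7, Positive4 σ ∧ D σ = 0 := by
  rintro ⟨σ, hσ, hDσ⟩
  obtain ⟨α, -, β, -, rfl⟩ := hclosed σ hσ.mem_deg_four hDσ
  exact not_positive4_ι_mul_add_ι_mul (linearIndependent_pair_single (by decide)) α β hσ

/-- second obstruction: let `g` be a 7-dimensional Lie algebra, given by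
structure equations `d e^i = dg i ∈ Λ²g*` with `d² = 0`, and extended to the
Chevalley–Eilenberg differential `D` on `Λ•g*`.  If every closed 4-form lies in
`⟨e^1,e^2⟩ ∧ Λ³g*` (i.e. is of the form `e^1∧α + e^2∧β` with `α, β ∈ Λ³g*`), then `g`
admits no coclosed `G₂`-structure: there is no positive 3-form `φ` with
`d(*_φ φ) = 0`.  Since `φ ↦ *_φ φ` is a double cover of the positive 4-forms, this is
formalized as: there is no closed positive (stable) 4-form `σ = *_φ φ`. -/
theorem stmt4_second_obstruction (dg : Fin 7 → E7) (hdg : ∀ i, dg i ∈ deg 2)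
    (D : E7 →ₗ[ℝ] E7) (hD : IsCE dg D) (hD2 : D ∘ₗ D = 0)
    (hclosed : ∀ κ ∈ deg 4, D κ = 0 →
      ∃ α ∈ deg 3, ∃ β ∈ deg 3, κ = ε 0 * α + ε 1 * β) :
    ¬ ∃ σ : E7, Positive4 σ ∧ D σ = 0 :=
  stmt4_second_obstruction_general D hclosed
end
end

section
/- On the Lie algebra 12357A with structure equations de^1=de^2=de^3=0, de^4=-e^{12}, de^5=-e^{14}-e^{23}, de^6=-e^{15}+e^{34}, de^7=-e^{16}+e^{35}, the 3-form ψ₋ = e^{125}+e^{236}+e^{146}+e^{345} is closed: dψ₋=0. Moreover, with ω = -e^{13}+e^{24}-(2/5)e^{56}+(3/5)e^{45}+(3/5)e^{26} and η=e^7, one has ω∧dω = ψ₋∧dη = 0. -/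
/-!
Each identity is a finite computation in `Λ•ℝ⁷`: the graded Leibniz rule reduces `d` of a
monomial to the structure equations, and anticommutation sorts every product of generators,
killing those with a repeated factor.
-/

noncomputable section

/-- Structure equations of the 5-step nilpotent Lie algebra `12357A`:
`de^1 = de^2 = de^3 = 0`, `de^4 = -e^{12}`, `de^5 = -e^{14}-e^{23}`,
`de^6 = -e^{15}+e^{34}`, `de^7 = -e^{16}+e^{35}`. -/
def dg12357A : Fin 7 → E7 :=
  ![0, 0, 0, -(ε 0 * ε 1), -(ε 0 * ε 3) - ε 1 * ε 2,
    -(ε 0 * ε 4) + ε 2 * ε 3, -(ε 0 * ε 5) + ε 2 * ε 4]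

/-- `ψ₋ = e^{125}+e^{236}+e^{146}+e^{345}`. -/
def ψm : E7 := ε 0*ε 1*ε 4 + ε 1*ε 2*ε 5 + ε 0*ε 3*ε 5 + ε 2*ε 3*ε 4
/-- `ω = -e^{13}+e^{24}-(2/5)e^{56}+(3/5)e^{45}+(3/5)e^{26}`. -/
def ω : E7 :=
  -(ε 0 * ε 2) + ε 1 * ε 3 - (2/5 : ℝ) • (ε 4 * ε 5)
    + (3/5 : ℝ) • (ε 3 * ε 4) + (3/5 : ℝ) • (ε 1 * ε 5)
/-- `η = e^7`. -/
def η : E7 := ε 6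

theorem ε_mul_self (i : Fin 7) : ε i * ε i = 0 := ExteriorAlgebra.ι_sq_zero _

theorem ε_mul_ε_mul_self (i : Fin 7) (x : E7) : ε i * (ε i * x) = 0 := by
  rw [← mul_assoc, ε_mul_self, zero_mul]

-- The hypothesis only orients the rewrite, so that `simp` sorts products of generators.
theorem ε_mul_ε_of_lt {i j : Fin 7} (_ : j < i) : ε i * ε j = -(ε j * ε i) :=
  eq_neg_of_add_eq_zero_left (ExteriorAlgebra.ι_add_mul_swap _ _)

theorem ε_mul_ε_mul_of_lt {i j : Fin 7} (h : j < i) (x : E7) :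
    ε i * (ε j * x) = -(ε j * (ε i * x)) := by
  rw [← mul_assoc, ε_mul_ε_of_lt h, neg_mul, mul_assoc]

namespace IsCE

variable {dg : Fin 7 → E7} {D : E7 →ₗ[ℝ] E7}

theorem map_ε (hD : IsCE dg D) (i : Fin 7) : D (ε i) = dg i := by
  simpa [hD.1] using hD.2 i 1

theorem map_ε_mul_ε (hD : IsCE dg D) (i j : Fin 7) :
    D (ε i * ε j) = dg i * ε j - ε i * dg j := by
  rw [hD.2, hD.map_ε]

theorem map_ε_mul_ε_mul_ε (hD : IsCE dg D) (i j k : Fin 7) :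
    D (ε i * ε j * ε k) = dg i * (ε j * ε k) - ε i * (dg j * ε k) + ε i * (ε j * dg k) := by
  rw [mul_assoc, hD.2, hD.2, hD.map_ε, mul_sub, sub_add]

end IsCE

section Nilpotent12357A

variable {D : E7 →ₗ[ℝ] E7}

theorem d_ψm_12357A (hD : IsCE dg12357A D) : D ψm = 0 := by
  simp only [ψm, map_add, hD.map_ε_mul_ε_mul_ε, dg12357A, Matrix.cons_val]
  simp only [mul_add, mul_sub, mul_neg, neg_mul, mul_zero, zero_mul, mul_assoc,
    ε_mul_self, ε_mul_ε_mul_self, ε_mul_ε_of_lt, ε_mul_ε_mul_of_lt, Fin.reduceLT]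
  module

theorem d_ω_12357A (hD : IsCE dg12357A D) :
    D ω = (2/5 : ℝ) • ψm - (8/5 : ℝ) • (ε 0 * ε 1 * ε 4) := by
  simp only [ω, ψm, map_add, map_sub, map_neg, map_smul, hD.map_ε_mul_ε, dg12357A, Matrix.cons_val]
  simp only [mul_add, sub_mul, mul_sub, mul_neg, neg_mul, mul_zero, zero_mul, mul_assoc,
    ε_mul_self, ε_mul_ε_of_lt, ε_mul_ε_mul_of_lt, Fin.reduceLT]
  module

theorem ω_mul_d_ω_12357A (hD : IsCE dg12357A D) : ω * D ω = 0 := by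
  rw [d_ω_12357A hD]
  simp only [ω, ψm, mul_add, add_mul, mul_sub, sub_mul, mul_neg, neg_mul, smul_mul_assoc,
    mul_smul_comm, mul_zero, mul_assoc, ε_mul_self, ε_mul_ε_mul_self, ε_mul_ε_of_lt,
    ε_mul_ε_mul_of_lt, Fin.reduceLT]
  module

theorem ψm_mul_d_η_12357A (hD : IsCE dg12357A D) : ψm * D η = 0 := by
  rw [η, hD.map_ε]
  simp only [ψm, dg12357A, Matrix.cons_val, mul_add, add_mul, mul_neg, mul_zero, mul_assoc,
    ε_mul_self, ε_mul_ε_mul_self, ε_mul_ε_of_lt, ε_mul_ε_mul_of_lt, Fin.reduceLT]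
  module

end Nilpotent12357A

/-- on `12357A`, `dψ₋ = 0`, and `ω ∧ dω = ψ₋ ∧ dη = 0`. -/
theorem stmt11_12357A (D : E7 →ₗ[ℝ] E7) (hD : IsCE dg12357A D) :
    D ψm = 0 ∧ ω * D ω = ψm * D η ∧ ω * D ω = 0 ∧ ψm * D η = 0 := by
  have hω := ω_mul_d_ω_12357A hD
  have hη := ψm_mul_d_η_12357A hD
  exact ⟨d_ψm_12357A hD, hω.trans hη.symm, hω, hη⟩
end
end
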